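/- If U and W are monotone sequential cascades and f : U → W is a continuous map (for the standard topologies) with f(max U) ⊆ max W and f(root of U) = root of W, then r_U(u) ≥ r_W(f(u)) for every u ∈ U, where r denotes the rank function. -/

import Mathlib

open Filter
open scoped Classical

/-- A sequential cascade, represented as a well-founded subtree of the sequential tree
`Σ` of finite sequences of naturals: it contains the root, is closed downwards, every
non-maximal element has infinitely many immediate successors, and it is well-founded
for the inverse order (no infinite branches). -/
structure SeqCascade where
  mem : Set (List ℕ)
  root_mem : ([] : List ℕ) ∈ mem
  closed : ∀ s n, s ++ [n] ∈ mem → s ∈ mem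
  infinite_succ : ∀ s ∈ mem, (∃ n, s ++ [n] ∈ mem) → {n | s ++ [n] ∈ mem}.Infinite
  wf : WellFounded fun t s : List ℕ => t ∈ mem ∧ ∃ n, t = s ++ [n]

namespace SeqCascade

/-- The set `max V` of maximal elements of the cascade. -/
def maxSet (V : SeqCascade) : Set (List ℕ) :=
  {s | s ∈ V.mem ∧ ∀ n, s ++ [n] ∉ V.mem}

/-- The contour `∫V(v)` of the subcascade of all successors of `v`: for a maximal `v`
it is the principal ultrafilter of `v`; otherwise it is the contour of the contours of
the subcascades at the immediate successors of `v`, along the cofinite filter on them. -/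
noncomputable def contourAt (V : SeqCascade) : List ℕ → Filter (List ℕ) :=
  V.wf.fix fun s rec =>
    if ∃ n, s ++ [n] ∈ V.mem then
      (Filter.cofinite ⊓ Filter.principal {n | s ++ [n] ∈ V.mem}).bind fun n =>
        if h : s ++ [n] ∈ V.mem then rec (s ++ [n]) ⟨h, n, rfl⟩ else ⊥
    else pure s

/-- The contour `∫V` of the cascade. -/
noncomputable def contour (V : SeqCascade) : Filter (List ℕ) := V.contourAt []

/-- The rank of an element: `0` for maximal elements, otherwise the least ordinal
greater than the ranks of all immediate successors. -/
noncomputable def rankAt (V : SeqCascade) : List ℕ → Ordinal.{0} :=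
  V.wf.fix fun s rec =>
    ⨆ n : {n : ℕ // s ++ [n] ∈ V.mem}, Order.succ (rec (s ++ [n.1]) ⟨n.2, n.1, rfl⟩)

/-- The rank of the cascade. -/
noncomputable def rank (V : SeqCascade) : Ordinal.{0} := V.rankAt []

/-- A cascade is monotone if the rank function is non-decreasing along the natural
`ω`-order of the immediate successors of each element. -/
def MonotoneCascade (V : SeqCascade) : Prop :=
  ∀ s ∈ V.mem, ∀ m n : ℕ, m ≤ n → s ++ [m] ∈ V.mem → s ++ [n] ∈ V.mem →
    V.rankAt (s ++ [m]) ≤ V.rankAt (s ++ [n])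

/-- The standard topology of a cascade: the finest topology in which, for every
non-maximal element, the cofinite filter on its immediate successors converges to it. -/
def std (V : SeqCascade) : TopologicalSpace (List ℕ) where
  IsOpen O := ∀ s ∈ O, (∃ n, s ++ [n] ∈ V.mem) →
    {n | s ++ [n] ∈ O} ∈ Filter.cofinite ⊓ Filter.principal {n | s ++ [n] ∈ V.mem}
  isOpen_univ := fun s _ _ => Filter.univ_mem
  isOpen_inter := fun O₁ O₂ h₁ h₂ s hs hex =>
    Filter.inter_mem (h₁ s hs.1 hex) (h₂ s hs.2 hex)
  isOpen_sUnion := fun S hS s hs hex => by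
    obtain ⟨O, hO, hsO⟩ := hs
    exact Filter.mem_of_superset (hS O hO s hsO hex) fun n hn => Set.mem_sUnion.2 ⟨O, hO, hn⟩

end SeqCascade

/-- Two filters mesh (`#`) if every member of the first intersects every member of the
second. -/
def Mesh {α : Type*} (F G : Filter α) : Prop := ∀ A ∈ F, ∀ B ∈ G, (A ∩ B).Nonempty


lemma SeqCascade.rankAt_def' (V : SeqCascade) (s : List ℕ) :
    V.rankAt s = ⨆ n : {n : ℕ // s ++ [n] ∈ V.mem}, Order.succ (V.rankAt (s ++ [n.1])) := by
  unfold SeqCascade.rankAt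
  rw [WellFounded.fix_eq]

lemma SeqCascade.rank_succ_lt' (V : SeqCascade) {s : List ℕ} {n : ℕ} (h : s ++ [n] ∈ V.mem) :
    V.rankAt (s ++ [n]) < V.rankAt s :=
  lt_of_lt_of_le (Order.lt_succ _) (by
    rw [V.rankAt_def' s]
    exact le_ciSup (Ordinal.bddAbove_range _) (⟨n, h⟩ : {n : ℕ // s ++ [n] ∈ V.mem}))

lemma head_after_eq {w t : List ℕ} {k : ℕ} (h : w ++ [k] <+: t) :
    ((t.drop w.length).headD 0) = k := by
  obtain ⟨r, hr⟩ := h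
  subst hr
  rw [List.append_assoc, List.drop_left]
  rfl

lemma prefix_snoc {l t : List ℕ} {a : ℕ} (h : l <+: t ++ [a]) : l <+: t ∨ l = t ++ [a] := by
  obtain ⟨r, hr⟩ := h
  rcases List.eq_nil_or_concat r with rfl | ⟨r', b, rfl⟩
  · right; simpa using hr
  · left
    rw [List.concat_eq_append, ← List.append_assoc] at hr
    obtain ⟨h1, _⟩ := List.append_inj' hr rfl
    exact ⟨r', h1⟩

lemma std_isOpen_iff (V : SeqCascade) {O : Set (List ℕ)} :
    @IsOpen _ V.std O ↔ ∀ s ∈ O, (∃ n, s ++ [n] ∈ V.mem) →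
      {n | s ++ [n] ∈ O} ∈ Filter.cofinite ⊓ Filter.principal {n | s ++ [n] ∈ V.mem} :=
  Iff.rfl

lemma exists_open_avoiding (W : SeqCascade) (hW : W.MonotoneCascade)
    {w : List ℕ} (hw : w ∈ W.mem) {β : Ordinal.{0}} (hβ : β < W.rankAt w)
    {S₀ : Set ℕ} (hS₀ : S₀.Infinite) {y : ℕ → List ℕ}
    (hy : ∀ n ∈ S₀, y n ∈ W.mem ∧ W.rankAt (y n) < β) :
    ∃ O : Set (List ℕ), @IsOpen _ W.std O ∧ w ∈ O ∧ {n | n ∈ S₀ ∧ y n ∉ O}.Infinite := by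
  have hyw : ∀ n ∈ S₀, y n ≠ w := by
    intro n hn he
    have h2 := (hy n hn).2
    rw [he] at h2
    exact absurd hβ (not_lt.2 h2.le)
  by_cases hT : {n | n ∈ S₀ ∧ ¬ ∃ k, w ++ [k] <+: y n}.Infinite
  · refine ⟨insert w {t | ∃ k, w ++ [k] <+: t}, ?_, Set.mem_insert _ _, ?_⟩
    · intro s hs _
      refine Filter.univ_mem' fun j => ?_
      rcases Set.mem_insert_iff.mp hs with rfl | ⟨k, hk⟩
      · exact Set.mem_insert_iff.mpr (Or.inr ⟨j, List.prefix_rfl⟩)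
      · exact Set.mem_insert_iff.mpr (Or.inr ⟨k, hk.trans (List.prefix_append _ _)⟩)
    · refine hT.mono ?_
      rintro n ⟨hn, hnk⟩
      refine ⟨hn, fun hmem => ?_⟩
      rcases Set.mem_insert_iff.mp hmem with he | ⟨k, hk⟩
      · exact hyw n hn he
      · exact hnk ⟨k, hk⟩
  · have hTfin : {n | n ∈ S₀ ∧ ¬ ∃ k, w ++ [k] <+: y n}.Finite := Set.not_infinite.mp hT
    set S : Set ℕ := {n | n ∈ S₀ ∧ ∃ k, w ++ [k] <+: y n} with hSdef
    have hS : S.Infinite := by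
      refine (hS₀.diff hTfin).mono ?_
      rintro n ⟨hn, hn2⟩
      exact ⟨hn, by_contra fun h => hn2 ⟨hn, h⟩⟩
    set m : ℕ → ℕ := fun n => ((y n).drop w.length).headD 0 with hmdef
    have hmk : ∀ n ∈ S, w ++ [m n] <+: y n := by
      rintro n ⟨_, k, hk⟩
      have : m n = k := head_after_eq hk
      rwa [this]
    obtain ⟨m₀, hm₀mem, hm₀rank⟩ : ∃ m₀, w ++ [m₀] ∈ W.mem ∧ β ≤ W.rankAt (w ++ [m₀]) := by
      by_contra hcon
      push_neg at hcon
      have hle : W.rankAt w ≤ β := by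
        rw [W.rankAt_def' w]
        rcases isEmpty_or_nonempty {n : ℕ // w ++ [n] ∈ W.mem} with h | h
        · rw [ciSup_of_empty]; exact bot_le
        · exact ciSup_le' fun i => Order.succ_le_of_lt (hcon i.1 i.2)
      exact absurd hβ (not_lt.2 hle)
    by_cases hexm : ∃ ms, {n | n ∈ S ∧ m n = ms}.Infinite
    · obtain ⟨ms, hms⟩ := hexm
      refine ⟨insert w {t | ∃ k, k ≠ ms ∧ w ++ [k] <+: t}, ?_, Set.mem_insert _ _, ?_⟩
      · intro s hs _
        rcases Set.mem_insert_iff.mp hs with rfl | ⟨k, hkne, hk⟩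
        · apply Filter.mem_inf_of_left
          rw [Filter.mem_cofinite]
          refine Set.Finite.subset (Set.finite_singleton ms) ?_
          intro j hj
          rw [Set.mem_compl_iff] at hj
          rw [Set.mem_singleton_iff]
          by_contra hne
          exact hj (Set.mem_insert_iff.mpr (Or.inr ⟨j, hne, List.prefix_rfl⟩))
        · refine Filter.univ_mem' fun j => ?_
          exact Set.mem_insert_iff.mpr (Or.inr ⟨k, hkne, hk.trans (List.prefix_append _ _)⟩)
      · refine hms.mono ?_
        rintro n ⟨hnS, hmn⟩
        refine ⟨hnS.1, fun hmem => ?_⟩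
        rcases Set.mem_insert_iff.mp hmem with he | ⟨k, hkne, hk⟩
        · exact hyw n hnS.1 he
        · apply hkne
          rw [← head_after_eq hk]
          exact hmn
    · push_neg at hexm
      have hfin : ∀ ms, {n | n ∈ S ∧ m n = ms}.Finite := fun ms => hexm ms
      refine ⟨insert w {t | ∃ k, m₀ ≤ k ∧ w ++ [k] <+: t ∧ ∀ n ∈ S, m n = k → ¬ (y n <+: t)},
        ?_, Set.mem_insert _ _, ?_⟩
      · intro s hs _
        rcases Set.mem_insert_iff.mp hs with hsw | ⟨k, hk0, hkpre, hkav⟩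
        · rw [hsw]
          rw [Filter.mem_inf_principal, Filter.mem_cofinite]
          refine Set.Finite.subset (Set.finite_Iio m₀) ?_
          intro j hj
          rw [Set.mem_compl_iff, Set.mem_setOf_eq] at hj
          rw [Set.mem_Iio]
          by_contra hjge
          push_neg at hjge
          apply hj
          intro hjmem
          refine Set.mem_insert_iff.mpr (Or.inr ⟨j, hjge, List.prefix_rfl, ?_⟩)
          intro n hnS hmn hpre2
          have h1 : w ++ [j] <+: y n := by rw [← hmn]; exact hmk n hnS
          have hlen : (y n).length = (w ++ [j]).length :=
            Nat.le_antisymm hpre2.length_le h1.length_le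
          have heq : y n = w ++ [j] := hpre2.eq_of_length hlen
          have hrk : β ≤ W.rankAt (y n) := by
            rw [heq]
            exact hm₀rank.trans (hW w hw m₀ j hjge hm₀mem hjmem)
          exact absurd (hy n hnS.1).2 (not_lt.2 hrk)
        · apply Filter.mem_inf_of_left
          rw [Filter.mem_cofinite]
          refine Set.Finite.subset (((hfin k).image (fun n => ((y n).drop s.length).headD 0))) ?_
          intro j hj
          rw [Set.mem_compl_iff, Set.mem_setOf_eq] at hj
          by_contra hjim
          apply hj
          refine Set.mem_insert_iff.mpr (Or.inr ⟨k, hk0, hkpre.trans (List.prefix_append _ _), ?_⟩)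
          intro n hnS hmn hpre2
          rcases prefix_snoc hpre2 with hpr | heq
          · exact hkav n hnS hmn hpr
          · apply hjim
            refine ⟨n, ⟨hnS, hmn⟩, ?_⟩
            exact head_after_eq (heq ▸ List.prefix_rfl)
      · refine hS.mono ?_
        intro n hnS
        refine ⟨hnS.1, fun hmem => ?_⟩
        rcases Set.mem_insert_iff.mp hmem with he | ⟨k, _, hkpre, hkav⟩
        · exact hyw n hnS.1 he
        · exact hkav n hnS (head_after_eq hkpre) List.prefix_rfl

theorem rank_nonincreasing_of_continuous (U W : SeqCascade)
    (hU : U.MonotoneCascade) (hW : W.MonotoneCascade)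
    (f : List ℕ → List ℕ)
    (hcont : @Continuous _ _ U.std W.std f)
    (hmem : ∀ u ∈ U.mem, f u ∈ W.mem)
    (hmax : ∀ u ∈ U.maxSet, f u ∈ W.maxSet)
    (hroot : f [] = ([] : List ℕ)) :
    ∀ u ∈ U.mem, W.rankAt (f u) ≤ U.rankAt u := by
  have H : ∀ u, u ∈ U.mem → W.rankAt (f u) ≤ U.rankAt u := by
    intro u
    induction u using WellFounded.induction U.wf with
    | _ v IH =>
      intro hv
      by_cases hne : ∃ n, v ++ [n] ∈ U.mem
      · by_contra hcon
        have hβ : U.rankAt v < W.rankAt (f v) := not_le.mp hcon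
        obtain ⟨O, hO, hwO, hinf⟩ := exists_open_avoiding W hW (hmem v hv) hβ
          (U.infinite_succ v hv hne) (y := fun n => f (v ++ [n]))
          (fun n hn => ⟨hmem _ hn, lt_of_le_of_lt (IH _ ⟨hn, n, rfl⟩ hn) (U.rank_succ_lt' hn)⟩)
        have hpre : @IsOpen _ U.std (f ⁻¹' O) := (@continuous_def _ _ U.std W.std f).mp hcont O hO
        have hc : ∀ s ∈ f ⁻¹' O, (∃ n, s ++ [n] ∈ U.mem) →
            {n | s ++ [n] ∈ f ⁻¹' O} ∈ Filter.cofinite ⊓ Filter.principal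
              {n | s ++ [n] ∈ U.mem} := hpre
        have hmc := hc v hwO hne
        rw [Filter.mem_inf_principal, Filter.mem_cofinite] at hmc
        refine hinf (hmc.subset ?_)
        rintro n ⟨hn1, hn2⟩
        rw [Set.mem_compl_iff, Set.mem_setOf_eq]
        intro himp
        exact hn2 (himp hn1)
      · have hmaxv : f v ∈ W.maxSet := hmax v ⟨hv, fun n hn => hne ⟨n, hn⟩⟩
        have hempty : IsEmpty {m : ℕ // f v ++ [m] ∈ W.mem} :=
          ⟨fun i => hmaxv.2 i.1 i.2⟩
        have h0 : W.rankAt (f v) = ⊥ := by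
          rw [W.rankAt_def']
          exact ciSup_of_empty _
        rw [h0]
        exact bot_le
  exact H
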